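/- arXiv:1407.5599 — 2 statements merged into one kernel-verified Lean document; each statement's English description precedes it below -/
import Mathlib

section
/- Let ν > 0, θ > 0 with 1 ≤ θν < 2, γ_i = θ/i and a_t^i = -γ_i ∏_{j=i+1}^t (1 - γ_j ν). Then ∑_{i=1}^t γ_i |a_t^i| ≤ θ^2 (ln t + 1)/t. -/
/-!
For `2 ≤ j` the hypothesis `1 ≤ θν ≤ 2` gives `0 ≤ 1 - θν/j ≤ 1 - 1/j`, and the product of the
`1 - 1/j` over `i < j ≤ t` telescopes to `i/t`. Hence the `i`-th term of the sum is at most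
`(θ/i)² · i/t = θ²/(t i)`, and summing over `i` leaves `θ²/t` times the harmonic number
`H_t ≤ 1 + ln t`.
-/

open Finset

lemma prod_Icc_one_sub_inv {i t : ℕ} (hi : 0 < i) (hit : i ≤ t) :
    ∏ j ∈ Icc (i + 1) t, (1 - (j : ℝ)⁻¹) = i / t := by
  induction t, hit using Nat.le_induction with
  | base =>
    rw [Icc_eq_empty (by omega), prod_empty, div_self (by positivity)]
  | succ n hn ih =>
    have hn0 : (0 : ℝ) < n := by exact_mod_cast hi.trans_le hn
    rw [prod_Icc_succ_top (by omega), ih]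
    push_cast
    field_simp
    ring

section GammaCoefficients

variable {θ ν : ℝ}

lemma one_sub_div_mul_mem_Icc (hθν1 : 1 ≤ θ * ν) (hθν2 : θ * ν ≤ 2) {j : ℕ} (hj : 2 ≤ j) :
    0 ≤ 1 - θ / j * ν ∧ 1 - θ / j * ν ≤ 1 - (j : ℝ)⁻¹ := by
  have hj' : (2 : ℝ) ≤ j := by exact_mod_cast hj
  rw [div_mul_eq_mul_div, sub_nonneg, div_le_one (by linarith), inv_eq_one_div]
  exact ⟨hθν2.trans hj', by gcongr⟩

lemma prod_one_sub_div_mul_mem_Icc (hθν1 : 1 ≤ θ * ν) (hθν2 : θ * ν ≤ 2) {i t : ℕ}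
    (hi : 0 < i) (hit : i ≤ t) :
    0 ≤ ∏ j ∈ Icc (i + 1) t, (1 - θ / j * ν) ∧
      ∏ j ∈ Icc (i + 1) t, (1 - θ / j * ν) ≤ i / t := by
  have hfac (j : ℕ) (hj : j ∈ Icc (i + 1) t) :=
    one_sub_div_mul_mem_Icc hθν1 hθν2 (j := j) (by simp only [mem_Icc] at hj; omega)
  refine ⟨prod_nonneg fun j hj ↦ (hfac j hj).1, ?_⟩
  rw [← prod_Icc_one_sub_inv hi hit]
  exact prod_le_prod (fun j hj ↦ (hfac j hj).1) fun j hj ↦ (hfac j hj).2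

lemma gamma_mul_abs_coeff_le (hθ : 0 < θ) (hθν1 : 1 ≤ θ * ν) (hθν2 : θ * ν ≤ 2) {i t : ℕ}
    (hi : 0 < i) (hit : i ≤ t) :
    θ / i * |-(θ / i) * ∏ j ∈ Icc (i + 1) t, (1 - θ / j * ν)| ≤ θ ^ 2 / t * (i : ℝ)⁻¹ := by
  obtain ⟨hprod_nonneg, hprod_le⟩ := prod_one_sub_div_mul_mem_Icc hθν1 hθν2 hi hit
  have hγ : 0 ≤ θ / i := by positivity
  have hi' : (0 : ℝ) < i := by exact_mod_cast hi
  rw [abs_mul, abs_neg, abs_of_nonneg hγ, abs_of_nonneg hprod_nonneg]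
  calc θ / i * (θ / i * ∏ j ∈ Icc (i + 1) t, (1 - θ / j * ν))
      ≤ θ / i * (θ / i * (i / t)) := by gcongr
    _ = θ ^ 2 / t * (i : ℝ)⁻¹ := by field_simp

end GammaCoefficients

lemma sum_Icc_inv_le_log_add_one (t : ℕ) : ∑ i ∈ Icc 1 t, (i : ℝ)⁻¹ ≤ Real.log t + 1 := by
  have h := harmonic_le_one_add_log t
  rw [harmonic_eq_sum_Icc] at h
  push_cast at h
  linarith

theorem gamma_coeff_sum_bound_small_general (ν θ : ℝ) (hθ : 0 < θ)
    (hθν1 : 1 ≤ θ * ν) (hθν2 : θ * ν < 2) (t : ℕ) :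
    ∑ i ∈ Finset.Icc 1 t,
        (θ / i) * |(-(θ / i) * ∏ j ∈ Finset.Icc (i + 1) t, (1 - (θ / j) * ν))|
      ≤ θ ^ 2 * (Real.log t + 1) / t := by
  calc ∑ i ∈ Icc 1 t, (θ / i) * |(-(θ / i) * ∏ j ∈ Icc (i + 1) t, (1 - (θ / j) * ν))|
      ≤ ∑ i ∈ Icc 1 t, θ ^ 2 / t * (i : ℝ)⁻¹ := by
        refine sum_le_sum fun i hi ↦ ?_
        rw [mem_Icc] at hi
        exact gamma_mul_abs_coeff_le hθ hθν1 hθν2.le hi.1 hi.2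
    _ = θ ^ 2 / t * ∑ i ∈ Icc 1 t, (i : ℝ)⁻¹ := by rw [mul_sum]
    _ ≤ θ ^ 2 / t * (Real.log t + 1) := by gcongr; exact sum_Icc_inv_le_log_add_one t
    _ = θ ^ 2 * (Real.log t + 1) / t := by ring

/-- If 1 ≤ θν < 2 then ∑_{i=1}^t γ_i |a_t^i| ≤ θ² (ln t + 1)/t. -/
theorem gamma_coeff_sum_bound_small (ν θ : ℝ) (hν : 0 < ν) (hθ : 0 < θ)
    (hθν1 : 1 ≤ θ * ν) (hθν2 : θ * ν < 2) (t : ℕ) (ht : 1 ≤ t) :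
    ∑ i ∈ Finset.Icc 1 t,
        (θ / i) * |(-(θ / i) * ∏ j ∈ Finset.Icc (i + 1) t, (1 - (θ / j) * ν))|
      ≤ θ ^ 2 * (Real.log t + 1) / t :=
  gamma_coeff_sum_bound_small_general ν θ hθ hθν1 hθν2 t
end

section
/- Let ν > 0, θ > 0 with θν an integer satisfying 2 ≤ θν ≤ t, γ_i = θ/i and a_t^i = -γ_i ∏_{j=i+1}^t (1 - γ_j ν). Then ∑_{i=1}^t γ_i |a_t^i| ≤ θ^2 / t. -/
/-!
Write `m = θν`. For `i < m` the product contains the factor `1 - m/m = 0`, so only the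
`t - m + 1 ≤ t - 1` indices `i ≥ m` contribute. For those, every factor satisfies
`0 ≤ 1 - m/j ≤ 1 - 2/j`, and `∏_{j=i+1}^t (1 - 2/j)` telescopes to `i(i-1) / (t(t-1))`,
so each term is at most `θ²/i² · i(i-1)/(t(t-1)) ≤ θ²/(t(t-1))`.
-/

open Finset

theorem prod_Icc_one_sub_two_div_mul {i t : ℕ} (hit : i ≤ t) :
    (∏ j ∈ Icc (i + 1) t, (1 - 2 / (j : ℝ))) * (t * (t - 1)) = i * (i - 1) := by
  induction t, hit using Nat.le_induction with
  | base => simp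
  | succ n hin ih =>
    rw [prod_Icc_succ_top (by omega), ← ih]
    push_cast
    field_simp
    ring

theorem prod_Icc_one_sub_div_le_prod_one_sub_two_div {c : ℝ} {i t : ℕ} (hc : 2 ≤ c)
    (hci : c ≤ i + 1) :
    ∏ j ∈ Icc (i + 1) t, (1 - c / j) ≤ ∏ j ∈ Icc (i + 1) t, (1 - 2 / (j : ℝ)) := by
  refine prod_le_prod (fun j hj => ?_) (fun j hj => ?_)
  all_goals
    have hcj : c ≤ j := hci.trans (by exact_mod_cast (mem_Icc.1 hj).1)
  · exact sub_nonneg.2 (div_le_one_of_le₀ hcj (by linarith))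
  · gcongr

theorem prod_Icc_one_sub_div_eq_zero {m i t : ℕ} (him : i < m) (hmt : m ≤ t) :
    ∏ j ∈ Icc (i + 1) t, (1 - (m : ℝ) / j) = 0 :=
  prod_eq_zero (mem_Icc.2 ⟨him, hmt⟩) (by rw [div_self (Nat.cast_ne_zero.2 (by omega))]; ring)

theorem mul_abs_neg_mul_prod_Icc_one_sub_div_le (θ : ℝ) {m i t : ℕ} (hm : 2 ≤ m) (hmi : m ≤ i)
    (hit : i ≤ t) :
    θ / i * |-(θ / i) * ∏ j ∈ Icc (i + 1) t, (1 - (m : ℝ) / j)| ≤ θ ^ 2 / (t * (t - 1)) := by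
  set P := ∏ j ∈ Icc (i + 1) t, (1 - (m : ℝ) / j)
  have hm2 : (2 : ℝ) ≤ m := by exact_mod_cast hm
  have hmi' : (m : ℝ) ≤ i := by exact_mod_cast hmi
  have hit' : (i : ℝ) ≤ t := by exact_mod_cast hit
  have hi0 : (0 : ℝ) < i := by linarith
  have hP0 : 0 ≤ P := prod_nonneg fun j hj => by
    have hmj : (m : ℝ) ≤ j := by exact_mod_cast hmi.trans (Nat.le_of_succ_le (mem_Icc.1 hj).1)
    exact sub_nonneg.2 (div_le_one_of_le₀ hmj (by positivity))
  have hP : P * (t * (t - 1)) ≤ i * (i - 1) := by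
    rw [← prod_Icc_one_sub_two_div_mul hit]
    gcongr
    · nlinarith
    · exact prod_Icc_one_sub_div_le_prod_one_sub_two_div hm2 (by linarith)
  rw [le_div_iff₀ (by nlinarith)]
  calc θ / i * |-(θ / i) * P| * (t * (t - 1))
      ≤ |θ / i| * |-(θ / i) * P| * (t * (t - 1)) := by
        gcongr
        · nlinarith
        · exact le_abs_self _
    _ = θ ^ 2 / i ^ 2 * (P * (t * (t - 1))) := by
        rw [abs_mul, abs_neg, abs_of_nonneg hP0, ← mul_assoc |θ / i|, abs_mul_abs_self]
        ring
    _ ≤ θ ^ 2 / i ^ 2 * (i * (i - 1)) := by gcongr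
    _ ≤ θ ^ 2 := by
        rw [div_mul_eq_mul_div, div_le_iff₀ (by positivity)]
        nlinarith [sq_nonneg θ]

theorem gamma_coeff_sum_bound_int_general (ν θ : ℝ) (t : ℕ)
    (hint : ∃ n : ℕ, θ * ν = n) (h2 : 2 ≤ θ * ν) (hle : θ * ν ≤ t) :
    ∑ i ∈ Finset.Icc 1 t,
        (θ / i) * |(-(θ / i) * ∏ j ∈ Finset.Icc (i + 1) t, (1 - (θ / j) * ν))|
      ≤ θ ^ 2 / t := by
  obtain ⟨m, hm⟩ := hint
  have hm2 : 2 ≤ m := by exact_mod_cast hm ▸ h2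
  have hmt : m ≤ t := by exact_mod_cast hm ▸ hle
  have ht : (2 : ℝ) ≤ t := by exact_mod_cast hm2.trans hmt
  have hfactor (j : ℕ) : 1 - θ / j * ν = 1 - m / j := by rw [div_mul_eq_mul_div, hm]
  simp_rw [hfactor]
  calc _ = ∑ i ∈ Icc m t, θ / i * |-(θ / i) * ∏ j ∈ Icc (i + 1) t, (1 - (m : ℝ) / j)| := by
        refine (sum_subset (Icc_subset_Icc (by omega) le_rfl) fun i hi him => ?_).symm
        rw [prod_Icc_one_sub_div_eq_zero (by simp only [mem_Icc] at hi him; omega) hmt]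
        simp
    _ ≤ #(Icc m t) • (θ ^ 2 / (t * (t - 1))) := sum_le_card_nsmul _ _ _ fun i hi =>
        mul_abs_neg_mul_prod_Icc_one_sub_div_le θ hm2 (mem_Icc.1 hi).1 (mem_Icc.1 hi).2
    _ ≤ (t - 1) * (θ ^ 2 / (t * (t - 1))) := by
        rw [Nat.card_Icc, nsmul_eq_mul, Nat.cast_sub (by omega)]
        gcongr ?_ * _
        · exact div_nonneg (sq_nonneg θ) (by nlinarith)
        · push_cast
          linarith [(by exact_mod_cast hm2 : (2 : ℝ) ≤ m)]
    _ = θ ^ 2 / t := by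
        field_simp [show (t : ℝ) - 1 ≠ 0 by linarith]

/-- If θν is an integer with 2 ≤ θν ≤ t then ∑_{i=1}^t γ_i |a_t^i| ≤ θ²/t. -/
theorem gamma_coeff_sum_bound_int (ν θ : ℝ) (hν : 0 < ν) (hθ : 0 < θ) (t : ℕ)
    (hint : ∃ n : ℕ, θ * ν = n) (h2 : 2 ≤ θ * ν) (hle : θ * ν ≤ t) :
    ∑ i ∈ Finset.Icc 1 t,
        (θ / i) * |(-(θ / i) * ∏ j ∈ Finset.Icc (i + 1) t, (1 - (θ / j) * ν))|
      ≤ θ ^ 2 / t :=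
  gamma_coeff_sum_bound_int_general ν θ t hint h2 hle
end
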